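/- Let q ∈ ℂ with q^j ≠ 1 for all integers j ≥ 1, let z ∈ ℂ with z ≠ 0, and let V = ℂ² with basis v₀, v₁. Let M(z) act on V ⊗ V ⊗ F̂ by (v_i ⊗ v_j ⊗ ξ) ↦ ∑_{a,b∈{0,1}} v_a ⊗ v_b ⊗ M(z)^{a,b}_{i,j} ξ. Then the following are right eigenvectors of M(z) with eigenvalue 1: (i) v₀ ⊗ v₀ ⊗ ξ and v₁ ⊗ v₁ ⊗ ξ for every ξ ∈ F̂; (ii) (α v₁ ⊗ v₀ + β v₀ ⊗ v₁) ⊗ χ(αz/β) for every α, β ∈ ℂ with β ≠ 0; i.e. M(z) fixes each of these vectors. -/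

import Mathlib

open scoped TensorProduct
open scoped Classical

noncomputable section

/-- The Fock space: complex vector space with basis `{|m⟩ : m ∈ ℕ}`. -/
abbrev FockSp : Type := ℕ →₀ ℂ

/-- basis vector `|m⟩` -/
def ket (m : ℕ) : FockSp := Finsupp.single m 1

/-- linear operator on the Fock space determined by its values on basis vectors -/
def opOfFun (g : ℕ → FockSp) : Module.End ℂ FockSp :=
  Finsupp.lsum ℂ fun m => LinearMap.toSpanSingleton ℂ FockSp (g m)

/-- `a⁺|m⟩ = |m+1⟩` -/
def aPlus : Module.End ℂ FockSp := opOfFun fun m => ket (m + 1)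

/-- `a⁻|m⟩ = (1-q^{2m})|m-1⟩`; at `q = 0` this is `a⁻|m⟩ = |m-1⟩` with `|-1⟩ = 0` -/
def aMinus (q : ℂ) : Module.End ℂ FockSp :=
  opOfFun fun m => (1 - q ^ (2 * m)) • ket (m - 1)

/-- `k|m⟩ = (-q)^m|m⟩`; at `q = 0` this is `k|m⟩ = δ_{m,0}|m⟩` -/
def kOp (q : ℂ) : Module.End ℂ FockSp := opOfFun fun m => (-q) ^ m • ket m

/-- `k̃|m⟩ = q^m|m⟩` -/
def ktOp (q : ℂ) : Module.End ℂ FockSp := opOfFun fun m => q ^ m • ket m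

/-- numerical value of a `{0,1}`-valued edge variable (`false ↔ 0`, `true ↔ 1`) -/
def bv (b : Bool) : ℕ := cond b 1 0

/-- the space `F̂` of formal sums `∑_{m≥0} c_m|m⟩`, represented by their coordinates -/
abbrev FHat : Type := ℕ → ℂ

/-- generic operator on `F̂` of the form `(c_m)_m ↦ (coef m · c_{idx m})_m` -/
def genOpF (coef : ℕ → ℂ) (idx : ℕ → ℕ) : Module.End ℂ FHat where
  toFun c := fun m => coef m * c (idx m)
  map_add' a b := by funext m; simp [mul_add]
  map_smul' r a := by funext m; simp [smul_eq_mul]; ring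

/-- componentwise extension of `a⁺` to `F̂`: `∑ c_m |m⟩ ↦ ∑ c_m |m+1⟩` -/
def aPlusF : Module.End ℂ FHat := genOpF (fun m => if m = 0 then 0 else 1) (fun m => m - 1)
/-- componentwise extension of `a⁻` to `F̂` -/
def aMinusF (q : ℂ) : Module.End ℂ FHat :=
  genOpF (fun m => 1 - q ^ (2 * (m + 1))) (fun m => m + 1)
/-- componentwise extension of `k` to `F̂` -/
def kFh (q : ℂ) : Module.End ℂ FHat := genOpF (fun m => (-q) ^ m) id
/-- componentwise extension of `k̃` to `F̂` -/
def ktFh (q : ℂ) : Module.End ℂ FHat := genOpF (fun m => q ^ m) id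

/-- the `M` operator extended componentwise to `F̂`: `MopF q z a b i j` is `M(z)^{a,b}_{i,j}` -/
def MopF (q z : ℂ) : Bool → Bool → Bool → Bool → Module.End ℂ FHat
  | false, false, false, false => 1
  | true, true, true, true => 1
  | false, true, true, false => z • aPlusF
  | true, false, false, true => z⁻¹ • aMinusF q
  | false, true, false, true => ktFh q
  | true, false, true, false => (-q) • ktFh q
  | _, _, _, _ => 0

/-- `(q)_m = ∏_{j=1}^m (1 - q^j)` -/
def qPoch (q : ℂ) (m : ℕ) : ℂ := ∏ j ∈ Finset.range m, (1 - q ^ (j + 1))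

/-- `χ(w) = ∑_{m≥0} (w^m/(q)_m)|m⟩ ∈ F̂` -/
def chiF (q w : ℂ) : FHat := fun m => w ^ m / qPoch q m

/-- coefficients of the vector `α v₁⊗v₀ + β v₀⊗v₁` in `V ⊗ V` -/
def vcoef (α β : ℂ) : Bool → Bool → ℂ
  | true, false => α
  | false, true => β
  | _, _ => 0

/-! The coefficients of `χ(w)` obey `(1 - q^{m+1}) c_{m+1} = w c_m`, which in operator form says
`(1 - k̃) χ(w) = w a⁺ χ(w)` and `a⁻ χ(w) = w (1 + q k̃) χ(w)`. For `w = αz/β` these two identities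
are precisely the `v₀ ⊗ v₁` and `v₁ ⊗ v₀` components of the eigenvector equation in (ii). In (i)
only the entries `M(z)^{a,b}_{i,i}` enter, and these equal `δ_{a,i} δ_{b,i}`. -/

theorem genOpF_apply (coef : ℕ → ℂ) (idx : ℕ → ℕ) (c : FHat) (m : ℕ) :
    genOpF coef idx c m = coef m * c (idx m) := rfl

theorem qPoch_succ (q : ℂ) (m : ℕ) : qPoch q (m + 1) = qPoch q m * (1 - q ^ (m + 1)) :=
  Finset.prod_range_succ _ m

theorem one_sub_pow_succ_mul_chiF_succ {q : ℂ} {m : ℕ} (hq : q ^ (m + 1) ≠ 1) (w : ℂ) :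
    (1 - q ^ (m + 1)) * chiF q w (m + 1) = w * chiF q w m := by
  have h : (1 : ℂ) - q ^ (m + 1) ≠ 0 := sub_ne_zero.2 hq.symm
  simp only [chiF, qPoch_succ]
  field_simp
  ring

section
variable {q : ℂ}

theorem chiF_sub_ktFh_chiF (hq : ∀ j : ℕ, 1 ≤ j → q ^ j ≠ 1) (w : ℂ) :
    chiF q w - ktFh q (chiF q w) = w • aPlusF (chiF q w) := by
  funext m
  cases m with
  | zero => simp [ktFh, aPlusF, genOpF_apply]
  | succ m =>
    have h := one_sub_pow_succ_mul_chiF_succ (hq (m + 1) m.succ_pos) w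
    simp only [Pi.sub_apply, Pi.smul_apply, ktFh, aPlusF, genOpF_apply, smul_eq_mul, id,
      m.succ_ne_zero, if_false, Nat.add_sub_cancel]
    linear_combination h

theorem aMinusF_chiF (hq : ∀ j : ℕ, 1 ≤ j → q ^ j ≠ 1) (w : ℂ) :
    aMinusF q (chiF q w) = w • (chiF q w + q • ktFh q (chiF q w)) := by
  funext m
  have h := one_sub_pow_succ_mul_chiF_succ (hq (m + 1) m.succ_pos) w
  simp only [Pi.add_apply, Pi.smul_apply, aMinusF, ktFh, genOpF_apply, smul_eq_mul, id]
  linear_combination (1 + q ^ (m + 1)) * h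

variable {α β : ℂ} (z : ℂ)

theorem aPlusF_add_ktFh_chiF (hq : ∀ j : ℕ, 1 ≤ j → q ^ j ≠ 1) (hβ : β ≠ 0) :
    (z • aPlusF) (α • chiF q (α * z / β)) + ktFh q (β • chiF q (α * z / β)) =
      β • chiF q (α * z / β) := by
  have hw : β * (α * z / β) = z * α := by field_simp
  have hplus : z • α • aPlusF (chiF q (α * z / β)) =
      β • (chiF q (α * z / β) - ktFh q (chiF q (α * z / β))) := by
    rw [chiF_sub_ktFh_chiF hq, smul_smul, smul_smul, hw]
  rw [LinearMap.smul_apply, map_smul, hplus, map_smul, smul_sub]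
  abel

theorem ktFh_add_aMinusF_chiF (hq : ∀ j : ℕ, 1 ≤ j → q ^ j ≠ 1) (hz : z ≠ 0) (hβ : β ≠ 0) :
    ((-q) • ktFh q) (α • chiF q (α * z / β)) + (z⁻¹ • aMinusF q) (β • chiF q (α * z / β)) =
      α • chiF q (α * z / β) := by
  have hw : β * (z⁻¹ * (α * z / β)) = α := by field_simp
  simp only [LinearMap.smul_apply, map_smul, aMinusF_chiF hq, smul_smul, hw]
  module

end

/-- right eigenvectors of `M(z)` with eigenvalue 1, where `M(z)` acts on
`V ⊗ V ⊗ F̂` by `v_i ⊗ v_j ⊗ ξ ↦ ∑_{a,b} v_a ⊗ v_b ⊗ M(z)^{a,b}_{i,j} ξ` (a vector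
`f : Bool → Bool → F̂` records the coefficients with respect to the basis `v_a ⊗ v_b`):
(i) `v₀⊗v₀⊗ξ` and `v₁⊗v₁⊗ξ` are fixed for every `ξ ∈ F̂`;
(ii) `(α v₁⊗v₀ + β v₀⊗v₁) ⊗ χ(αz/β)` is fixed for all `α, β` with `β ≠ 0`. -/
theorem M_right_eigenvectors (q z : ℂ) (hq : ∀ j : ℕ, 1 ≤ j → q ^ j ≠ 1) (hz : z ≠ 0) :
    (∀ ξ : FHat, ∀ a b : Bool,
        (∑ i : Bool, ∑ j : Bool,
          MopF q z a b i j (if i = false ∧ j = false then ξ else 0)) =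
        (if a = false ∧ b = false then ξ else 0)) ∧
    (∀ ξ : FHat, ∀ a b : Bool,
        (∑ i : Bool, ∑ j : Bool,
          MopF q z a b i j (if i = true ∧ j = true then ξ else 0)) =
        (if a = true ∧ b = true then ξ else 0)) ∧
    (∀ α β : ℂ, β ≠ 0 → ∀ a b : Bool,
        (∑ i : Bool, ∑ j : Bool,
          MopF q z a b i j (vcoef α β i j • chiF q (α * z / β))) =
        vcoef α β a b • chiF q (α * z / β)) := by
  refine ⟨fun ξ a b => ?_, fun ξ a b => ?_, fun α β hβ a b => ?_⟩
  · cases a <;> cases b <;> simp [MopF]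
  · cases a <;> cases b <;> simp [MopF]
  · cases a <;> cases b <;>
      simp only [Fintype.sum_bool, MopF, vcoef, LinearMap.zero_apply, map_zero, zero_smul,
        add_zero, zero_add]
    · exact aPlusF_add_ktFh_chiF z hq hβ
    · exact ktFh_add_aMinusF_chiF z hq hz hβ

end
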